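/- arXiv:1603.08325 — 2 statements merged into one kernel-verified Lean document; each statement's English description precedes it below -/
import Mathlib

section
/- Let I1, I2, V1, V2 ∈ ℂ with V2 ≠ 0, I1+V1 ≠ 0, I2+V2 ≠ 0 and I2+V1 ≠ 0, and let (Ī1,Ī2,V̄1,V̄2) = χ1(I1,I2,V1,V2) with V̄2 ≠ 0 and Ī2+V̄1 ≠ 0. Set a = I1I2−V1V2, b = −V1V2, x = 1/(V2(I2+V1)), y = 1/V2, x̄ = 1/(V̄2(Ī2+V̄1)), ȳ = 1/V̄2. Then, provided the denominators below are nonzero, x̄ = −(b·x+1)·y² / (b·(b·x+1)·y² − (a−b)·x) and ȳ = (a·x̄² + x̄) / ((b·x̄+1)·y). That is, the time evolution of the discrete Toda lattice χ1 of type A^(1)_1 on the transformed spectral curve is realized as the QRT map φ_TL. -/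
/-!
The Toda step conserves `Ī₂ + V̄₁ = I₂ + V₂`, so `V̄₂ (Ī₂ + V̄₁) = (I₁ + V₁) V₂`, giving
`x̄ = 1 / (V₂ (I₁ + V₁))` and `ȳ = (I₂ + V₂) x̄`. On the QRT side, `b = -V₁V₂` gives
`b x + 1 = I₂ / (I₂ + V₁)` and `b x̄ + 1 = I₁ / (I₁ + V₁)`, after which both components of
`φ_TL` reduce to these formulas. The nonvanishing of the QRT denominators forces `I₁, I₂ ≠ 0`,
which the cancellations need.
-/

section
variable {K : Type*} [Field K]

theorem toda_I2_add_V1 {I1 I2 V1 V2 : K} (h1 : I1 + V1 ≠ 0) :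
    (I2 + V2) / (I1 + V1) * I1 + (I2 + V2) / (I1 + V1) * V1 = I2 + V2 := by
  rw [← mul_add, div_mul_cancel₀ _ h1]

theorem neg_mul_mul_one_div_add_one {u v w : K} (hv : v ≠ 0) (hw : w + u ≠ 0) :
    -(u * v) * (1 / (v * (w + u))) + 1 = w / (w + u) := by
  field_simp
  ring

end

theorem toda_evolution_is_QRT_map_general (I1 I2 V1 V2 : ℂ)
    (hV2 : V2 ≠ 0) (h1 : I1 + V1 ≠ 0) (h2 : I2 + V2 ≠ 0) (h3 : I2 + V1 ≠ 0)
    (I2' V1' V2' : ℂ)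
    (hI2' : I2' = (I2 + V2) / (I1 + V1) * I1)
    (hV1' : V1' = (I2 + V2) / (I1 + V1) * V1)
    (hV2' : V2' = (I1 + V1) / (I2 + V2) * V2)
    (a b x y x' y' : ℂ)
    (ha : a = I1 * I2 - V1 * V2)
    (hb : b = -(V1 * V2))
    (hx : x = 1 / (V2 * (I2 + V1))) (hy : y = 1 / V2)
    (hx' : x' = 1 / (V2' * (I2' + V1'))) (hy' : y' = 1 / V2')
    (hden1 : b * (b * x + 1) * y ^ 2 - (a - b) * x ≠ 0)
    (hden2 : (b * x' + 1) * y ≠ 0) :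
    x' = -((b * x + 1) * y ^ 2) / (b * (b * x + 1) * y ^ 2 - (a - b) * x)
    ∧ y' = (a * x' ^ 2 + x') / ((b * x' + 1) * y) := by
  have hsum : I2' + V1' = I2 + V2 := by rw [hI2', hV1', toda_I2_add_V1 h1]
  have hx'_eq : x' = 1 / (V2 * (I1 + V1)) := by
    rw [hx', hsum, hV2']
    field_simp
  have hy'_eq : y' = (I2 + V2) * x' := by
    rw [hy', hV2', hx'_eq]
    field_simp
  have hbx : b * x + 1 = I2 / (I2 + V1) := by
    rw [hb, hx]; exact neg_mul_mul_one_div_add_one hV2 h3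
  have hbx' : b * x' + 1 = I1 / (I1 + V1) := by
    rw [hb, hx'_eq]; exact neg_mul_mul_one_div_add_one hV2 h1
  have hden : b * (b * x + 1) * y ^ 2 - (a - b) * x = -(I2 * (I1 + V1)) / (V2 * (I2 + V1)) := by
    rw [hbx, ha, hb, hx, hy]
    field_simp
    ring
  have hI2 : I2 ≠ 0 := by rintro rfl; simp [hden] at hden1
  have hI1 : I1 ≠ 0 := by rintro rfl; simp [hbx'] at hden2
  constructor
  · rw [hden, hbx, hy, hx'_eq]
    field_simp
  · rw [hbx', hy, hy'_eq, hx'_eq, ha]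
    field_simp
    ring

/-- The time evolution of the discrete Toda lattice `χ₁` of type `A₁⁽¹⁾` on the
transformed spectral curve is realized as the QRT map `φ_TL`. -/
theorem toda_evolution_is_QRT_map (I1 I2 V1 V2 : ℂ)
    (hV2 : V2 ≠ 0) (h1 : I1 + V1 ≠ 0) (h2 : I2 + V2 ≠ 0) (h3 : I2 + V1 ≠ 0)
    (I1' I2' V1' V2' : ℂ)
    (hI1' : I1' = (I1 + V1) / (I2 + V2) * I2)
    (hI2' : I2' = (I2 + V2) / (I1 + V1) * I1)
    (hV1' : V1' = (I2 + V2) / (I1 + V1) * V1)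
    (hV2' : V2' = (I1 + V1) / (I2 + V2) * V2)
    (hV2'ne : V2' ≠ 0) (h3' : I2' + V1' ≠ 0)
    (a b x y x' y' : ℂ)
    (ha : a = I1 * I2 - V1 * V2)
    (hb : b = -(V1 * V2))
    (hx : x = 1 / (V2 * (I2 + V1))) (hy : y = 1 / V2)
    (hx' : x' = 1 / (V2' * (I2' + V1'))) (hy' : y' = 1 / V2')
    (hden1 : b * (b * x + 1) * y ^ 2 - (a - b) * x ≠ 0)
    (hden2 : (b * x' + 1) * y ≠ 0) :
    x' = -((b * x + 1) * y ^ 2) / (b * (b * x + 1) * y ^ 2 - (a - b) * x)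
    ∧ y' = (a * x' ^ 2 + x') / ((b * x' + 1) * y) :=
  toda_evolution_is_QRT_map_general I1 I2 V1 V2 hV2 h1 h2 h3 I2' V1' V2' hI2' hV1' hV2' a b x y x'
    y' ha hb hx hy hx' hy' hden1 hden2
end

section
/- Let z, w ∈ ℂ be nonzero, let (z',w') = φ with z' = (w²+1)/z and w' = (z'²+1)/w, and assume z' ≠ 0 and w' ≠ 0. Then (w'² + z'² + 1)/(z'·w') = (w² + z² + 1)/(z·w); that is, λ(z,w) = −(w² + z² + 1)/(z·w) is a conserved quantity of the QRT map arising from the seed mutations of the cluster algebra of type A^(1)_1 (with trivial coefficients), and its invariant curve is w² + λ·z·w + z² + 1 = 0. -/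
/-! Viewed as a quadratic in `z`, the curve `w² + λ z w + z² + 1 = 0` has roots whose product is
`w² + 1`, so the mutation `z ↦ (w² + 1)/z` swaps its two roots and stays on the curve, i.e. it
preserves `λ = -(w² + z² + 1)/(z w)`. The invariant is symmetric in `z` and `w`, so the same holds
for the mutation `w ↦ (z² + 1)/w`. -/

namespace QRT

variable {K : Type*} [Field K]

def invariant (z w : K) : K := (w ^ 2 + z ^ 2 + 1) / (z * w)

theorem invariant_comm (z w : K) : invariant z w = invariant w z := by
  unfold invariant
  ring

theorem invariant_mutate_left {z z' w : K} (hz : z ≠ 0) (hz' : z' ≠ 0) (hw : w ≠ 0)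
    (h : z * z' = w ^ 2 + 1) : invariant z' w = invariant z w := by
  unfold invariant
  rw [div_eq_div_iff (mul_ne_zero hz' hw) (mul_ne_zero hz hw)]
  linear_combination w * (z' - z) * h

theorem invariant_mutate_right {z w w' : K} (hz : z ≠ 0) (hw : w ≠ 0) (hw' : w' ≠ 0)
    (h : w * w' = z ^ 2 + 1) : invariant z w' = invariant z w := by
  rw [invariant_comm, invariant_mutate_left hw hw' hz h, invariant_comm]

theorem curve_eq_zero {z w : K} (hz : z ≠ 0) (hw : w ≠ 0) :
    w ^ 2 + -invariant z w * z * w + z ^ 2 + 1 = 0 := by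
  unfold invariant
  field_simp
  ring

end QRT

open QRT in
/-- `λ(z,w) = −(w² + z² + 1)/(zw)` is a conserved quantity of the QRT map
`(z,w) ↦ ((w²+1)/z, (z'²+1)/w)` arising from the seed mutations of the cluster
algebra of type `A₁⁽¹⁾` with trivial coefficients, with invariant curve
`w² + λzw + z² + 1 = 0`. -/
theorem QRT_A11_trivial_coeff_conserved (z w z' w' : ℂ)
    (hz : z ≠ 0) (hw : w ≠ 0)
    (hz' : z' = (w ^ 2 + 1) / z) (hw' : w' = (z' ^ 2 + 1) / w)
    (hz'ne : z' ≠ 0) (hw'ne : w' ≠ 0) :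
    ((w' ^ 2 + z' ^ 2 + 1) / (z' * w') = (w ^ 2 + z ^ 2 + 1) / (z * w))
    ∧ (∀ lam : ℂ, lam = -((w ^ 2 + z ^ 2 + 1) / (z * w)) →
        w ^ 2 + lam * z * w + z ^ 2 + 1 = 0 ∧
        w' ^ 2 + lam * z' * w' + z' ^ 2 + 1 = 0) := by
  have hzz' : z * z' = w ^ 2 + 1 := by rw [hz', mul_div_cancel₀ _ hz]
  have hww' : w * w' = z' ^ 2 + 1 := by rw [hw', mul_div_cancel₀ _ hw]
  have hconserved : invariant z' w' = invariant z w := by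
    rw [invariant_mutate_right hz'ne hw hw'ne hww', invariant_mutate_left hz hz'ne hw hzz']
  refine ⟨hconserved, fun lam hlam => ⟨?_, ?_⟩⟩
  · exact hlam ▸ curve_eq_zero hz hw
  · rw [hlam, ← invariant, ← hconserved]
    exact curve_eq_zero hz'ne hw'ne
end
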